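/- arXiv:1611.00595 — 5 statements merged into one kernel-verified Lean document; each statement's English description precedes it below -/
import Mathlib

section
/- Let J, R, Q be real n×n matrices with Jᵀ = −J, R positive semidefinite, and Q positive definite. Then every eigenvalue λ ∈ ℂ of the matrix (J − R)Q (viewed as a complex matrix) satisfies Re(λ) ≤ 0. -/
/-!
Put `y = Q x`. Then `y* (J - R) y = μ · (x* Q x)`, where `x* Q x > 0`, while `y* J y` is purely
imaginary because `J` is skew-Hermitian, so `Re (y* (J - R) y) = -(y* R y) ≤ 0`. The real
hypotheses pass to the complexification because a real positive semidefinite matrix factors as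
`Bᵀ B`.
-/

open Matrix

/-- The complexification of a real matrix. -/
noncomputable def toC {n : ℕ} (A : Matrix (Fin n) (Fin n) ℝ) : Matrix (Fin n) (Fin n) ℂ :=
  A.map (fun a => (a : ℂ))

open scoped ComplexOrder MatrixOrder

namespace Matrix

variable {n 𝕜 : Type*} [RCLike 𝕜]

lemma conjTranspose_map_algebraMap_eq_neg {J : Matrix n n ℝ} (hJ : Jᵀ = -J) :
    (J.map (algebraMap ℝ 𝕜))ᴴ = -J.map (algebraMap ℝ 𝕜) := by
  rw [← conjTranspose_map _ fun a => by simp, conjTranspose_eq_transpose_of_trivial, hJ,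
    Matrix.map_neg]
  simp

variable [Fintype n]

lemma PosSemidef.map_algebraMap {A : Matrix n n ℝ} (hA : A.PosSemidef) :
    (A.map (algebraMap ℝ 𝕜)).PosSemidef := by
  classical
  obtain ⟨B, rfl⟩ := CStarAlgebra.nonneg_iff_eq_star_mul_self.mp hA.nonneg
  rw [Matrix.map_mul, star_eq_conjTranspose, conjTranspose_map _ fun a => by simp]
  exact posSemidef_conjTranspose_mul_self _

lemma PosDef.map_algebraMap {A : Matrix n n ℝ} (hA : A.PosDef) :
    (A.map (algebraMap ℝ 𝕜)).PosDef := by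
  classical
  refine hA.posSemidef.map_algebraMap.posDef_iff_det_ne_zero.mpr ?_
  rw [← RingHom.mapMatrix_apply, ← RingHom.map_det]
  simpa using hA.det_pos.ne'

lemma re_star_dotProduct_mulVec_self_eq_zero {J : Matrix n n 𝕜} (hJ : Jᴴ = -J) (x : n → 𝕜) :
    RCLike.re (star x ⬝ᵥ J *ᵥ x) = 0 := by
  have hconj : star (star x ⬝ᵥ J *ᵥ x) = -(star x ⬝ᵥ J *ᵥ x) := by
    rw [← star_dotProduct, star_mulVec, ← dotProduct_mulVec, hJ, neg_mulVec, dotProduct_neg]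
  have hre := RCLike.re_eq_add_conj (star x ⬝ᵥ J *ᵥ x)
  rw [← RCLike.star_def, hconj, add_neg_cancel, zero_div] at hre
  exact_mod_cast hre

lemma re_le_zero_of_skewHermitian_sub_posSemidef_mul_posDef_mulVec_eq_smul
    {J R Q : Matrix n n 𝕜} (hJ : Jᴴ = -J) (hR : R.PosSemidef) (hQ : Q.PosDef)
    {μ : 𝕜} {x : n → 𝕜} (hx : x ≠ 0) (heig : ((J - R) * Q) *ᵥ x = μ • x) :
    RCLike.re μ ≤ 0 := by
  set c := star x ⬝ᵥ Q *ᵥ x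
  set y := Q *ᵥ x
  have hc_im : RCLike.im c = 0 := hQ.isHermitian.im_star_dotProduct_mulVec_self x
  have hc_re : 0 < RCLike.re c := hQ.re_dotProduct_pos hx
  have hy : star y ⬝ᵥ (J - R) *ᵥ y = μ * star c := by
    rw [mulVec_mulVec, heig, dotProduct_smul, smul_eq_mul, star_dotProduct]
  have hy_re : RCLike.re (star y ⬝ᵥ (J - R) *ᵥ y) ≤ 0 := by
    rw [sub_mulVec, dotProduct_sub, map_sub, re_star_dotProduct_mulVec_self_eq_zero hJ]
    linarith [hR.re_dotProduct_nonneg y]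
  rw [hy, RCLike.mul_re, RCLike.star_def, RCLike.conj_re, RCLike.conj_im, hc_im] at hy_re
  exact nonpos_of_mul_nonpos_left (by simpa using hy_re) hc_re

end Matrix

theorem eigenvalues_DH_nonpos_re {n : ℕ} (J R Q : Matrix (Fin n) (Fin n) ℝ)
    (hJ : Jᵀ = -J) (hR : R.PosSemidef) (hQ : Q.PosDef)
    (μ : ℂ) (x : Fin n → ℂ) (hx : x ≠ 0) (heig : toC ((J - R) * Q) *ᵥ x = μ • x) :
    μ.re ≤ 0 := by
  have htoC : toC ((J - R) * Q) =
      (J.map (algebraMap ℝ ℂ) - R.map (algebraMap ℝ ℂ)) * Q.map (algebraMap ℝ ℂ) := by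
    rw [← Matrix.map_sub _ (map_sub _), ← Matrix.map_mul]
    rfl
  rw [htoC] at heig
  exact re_le_zero_of_skewHermitian_sub_posSemidef_mul_posDef_mulVec_eq_smul
    (conjTranspose_map_algebraMap_eq_neg hJ) hR.map_algebraMap hQ.map_algebraMap hx heig
end

section
/- Every DH matrix is stable: if J, R, Q are real n×n matrices with Jᵀ = −J, R positive semidefinite, and Q positive definite, then A := (J − R)Q is stable, i.e., every eigenvalue λ ∈ ℂ of A satisfies Re(λ) ≤ 0 and every eigenvalue with Re(λ) = 0 is semisimple. -/
open Matrix
open scoped ComplexOrder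

/-- A real matrix is stable if every complex eigenvalue has nonpositive real part and
every purely imaginary eigenvalue is semisimple (generalized eigenspace = eigenspace). -/
def IsStable {n : ℕ} (A : Matrix (Fin n) (Fin n) ℝ) : Prop :=
  ∀ μ : ℂ, (∃ x : Fin n → ℂ, x ≠ 0 ∧ toC A *ᵥ x = μ • x) →
    μ.re ≤ 0 ∧ (μ.re = 0 →
      ∀ x : Fin n → ℂ, ((toC A - μ • 1) ^ n) *ᵥ x = 0 ↔ (toC A - μ • 1) *ᵥ x = 0)

/-!
For `A = (J - R) Q` the Lyapunov matrix is `Aᵀ Q + Q A = Q (Jᵀ + J - 2R) Q = -2 Q R Q ≤ 0`, so `A`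
is dissipative for the inner product `⟨u, v⟩_Q = u* Q v`. If `A x = μ x` with `x ≠ 0`, then
`x* (A* Q + Q A) x = 2 Re μ ⟨x, x⟩_Q`, which forces `Re μ ≤ 0`. If `Re μ = 0`, this quadratic form
vanishes at `x`, so the negative semidefinite matrix `A* Q + Q A` kills `x`, i.e.
`(A - μ)* Q x = 0`. Hence an eigenvector `w = (A - μ) y` is `Q`-orthogonal to the range of
`A - μ`, in particular to itself, so `w = 0`: the kernels of `(A - μ)²` and `A - μ` agree.
-/

namespace Matrix

variable {ι : Type*} [Fintype ι]

lemma PosSemidef.map_ofReal {A : Matrix ι ι ℝ} (hA : A.PosSemidef) :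
    (A.map ((↑) : ℝ → ℂ)).PosSemidef := by
  classical
  open scoped MatrixOrder in
  obtain ⟨B, rfl⟩ := CStarAlgebra.nonneg_iff_eq_star_mul_self.mp hA.nonneg
  have hmap : (star B * B).map ((↑) : ℝ → ℂ) = (B.map (↑))ᴴ * B.map (↑) := by
    ext i j
    simp [Matrix.mul_apply]
  rw [hmap]
  exact posSemidef_conjTranspose_mul_self _

lemma PosDef.map_ofReal {A : Matrix ι ι ℝ} (hA : A.PosDef) :
    (A.map ((↑) : ℝ → ℂ)).PosDef := by
  classical
  have hdet : (A.map ((↑) : ℝ → ℂ)).det = A.det := (Complex.ofRealHom.map_det A).symm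
  rw [hA.posSemidef.map_ofReal.posDef_iff_det_ne_zero, hdet]
  exact_mod_cast hA.det_pos.ne'

lemma pow_mulVec_eq_zero_iff {R : Type*} [Semiring R] [DecidableEq ι] {N : Matrix ι ι R}
    (hN : ∀ y, N *ᵥ (N *ᵥ y) = 0 → N *ᵥ y = 0) {k : ℕ} (hk : k ≠ 0) (y : ι → R) :
    (N ^ k) *ᵥ y = 0 ↔ N *ᵥ y = 0 := by
  obtain ⟨k, rfl⟩ := Nat.exists_eq_succ_of_ne_zero hk
  clear hk
  induction k generalizing y with
  | zero => rw [pow_one]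
  | succ k ih =>
    rw [pow_succ, ← mulVec_mulVec, ih]
    exact ⟨hN y, fun h => by rw [h, mulVec_zero]⟩

lemma posSemidef_neg_lyapunov_sub_mul {J R Q : Matrix ι ι ℝ} (hJ : Jᵀ = -J)
    (hR : R.PosSemidef) (hQ : Q.IsHermitian) :
    (-(((J - R) * Q)ᵀ * Q + Q * ((J - R) * Q))).PosSemidef := by
  have hQt : Qᵀ = Q := by rw [← conjTranspose_eq_transpose_of_trivial, hQ.eq]
  have hRt : Rᵀ = R := by rw [← conjTranspose_eq_transpose_of_trivial, hR.isHermitian.eq]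
  have h : -(((J - R) * Q)ᵀ * Q + Q * ((J - R) * Q)) = Qᴴ * (2 • R) * Q := by
    rw [transpose_mul, transpose_sub, hJ, hRt, hQt, hQ.eq]
    noncomm_ring
  rw [h]
  exact (hR.smul zero_le_two).conjTranspose_mul_mul_same Q

section Lyapunov

variable {M P : Matrix ι ι ℂ} {μ : ℂ} {x : ι → ℂ}

lemma star_dotProduct_lyapunov_mulVec (hx : M *ᵥ x = μ • x) :
    star x ⬝ᵥ (Mᴴ * P + P * M) *ᵥ x = (2 * μ.re : ℝ) * (star x ⬝ᵥ P *ᵥ x) := by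
  have hleft : star x ⬝ᵥ (Mᴴ * P) *ᵥ x = star μ * (star x ⬝ᵥ P *ᵥ x) := by
    rw [← mulVec_mulVec, dotProduct_mulVec, ← conjTranspose_conjTranspose M, ← star_mulVec,
      conjTranspose_conjTranspose, hx, star_smul, smul_dotProduct, smul_eq_mul]
  have hright : star x ⬝ᵥ (P * M) *ᵥ x = μ * (star x ⬝ᵥ P *ᵥ x) := by
    rw [← mulVec_mulVec, hx, mulVec_smul, dotProduct_smul, smul_eq_mul]
  rw [add_mulVec, dotProduct_add, hleft, hright, ← Complex.add_conj, Complex.star_def]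
  ring

lemma re_nonpos_of_lyapunov (hP : P.PosDef) (hL : (-(Mᴴ * P + P * M)).PosSemidef)
    (hx0 : x ≠ 0) (hx : M *ᵥ x = μ • x) : μ.re ≤ 0 := by
  have hquad := hL.dotProduct_mulVec_nonneg x
  rw [neg_mulVec, dotProduct_neg, star_dotProduct_lyapunov_mulVec hx] at hquad
  have hpos := hP.dotProduct_mulVec_pos hx0
  rw [Complex.lt_def] at hpos
  rw [Complex.le_def] at hquad
  simp only [Complex.zero_re, Complex.neg_re, Complex.re_ofReal_mul] at hquad hpos
  nlinarith [hquad.1, hpos.1]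

lemma lyapunov_mulVec_eq_zero (hL : (-(Mᴴ * P + P * M)).PosSemidef)
    (hμ : μ.re = 0) (hx : M *ᵥ x = μ • x) : (Mᴴ * P + P * M) *ᵥ x = 0 := by
  have hquad : star x ⬝ᵥ (-(Mᴴ * P + P * M)) *ᵥ x = 0 := by
    rw [neg_mulVec, dotProduct_neg, star_dotProduct_lyapunov_mulVec hx, hμ]
    simp
  rwa [hL.dotProduct_mulVec_zero_iff, neg_mulVec, neg_eq_zero] at hquad

variable [DecidableEq ι]

lemma conjTranspose_sub_smul_one_mulVec_eq_zero (hL : (-(Mᴴ * P + P * M)).PosSemidef)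
    (hμ : μ.re = 0) (hx : M *ᵥ x = μ • x) : (M - μ • 1)ᴴ *ᵥ (P *ᵥ x) = 0 := by
  have h := lyapunov_mulVec_eq_zero hL hμ hx
  have hconj : star μ = -μ := by
    apply Complex.ext <;> simp [hμ]
  rw [add_mulVec, ← mulVec_mulVec, ← mulVec_mulVec, hx, mulVec_smul] at h
  rw [conjTranspose_sub, conjTranspose_smul, conjTranspose_one, hconj, sub_mulVec, smul_mulVec,
    one_mulVec, neg_smul, sub_neg_eq_add, h]

lemma sub_smul_one_mulVec_eq_zero_of_sq (hP : P.PosDef) (hL : (-(Mᴴ * P + P * M)).PosSemidef)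
    (hμ : μ.re = 0) {y : ι → ℂ} (hy : (M - μ • 1) *ᵥ ((M - μ • 1) *ᵥ y) = 0) :
    (M - μ • 1) *ᵥ y = 0 := by
  generalize hw_def : (M - μ • 1) *ᵥ y = w at hy ⊢
  have hw : M *ᵥ w = μ • w := by
    rwa [sub_mulVec, smul_mulVec, one_mulVec, sub_eq_zero] at hy
  have hself : star w ⬝ᵥ P *ᵥ w = 0 := by
    calc star w ⬝ᵥ P *ᵥ w = star (P *ᵥ w) ⬝ᵥ (M - μ • 1) *ᵥ y := by
          rw [hw_def, star_mulVec, hP.isHermitian.eq, dotProduct_mulVec]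
      _ = star ((M - μ • 1)ᴴ *ᵥ (P *ᵥ w)) ⬝ᵥ y := by
          rw [star_mulVec (M - μ • 1)ᴴ, conjTranspose_conjTranspose, dotProduct_mulVec]
      _ = 0 := by
          rw [conjTranspose_sub_smul_one_mulVec_eq_zero hL hμ hw, star_zero, zero_dotProduct]
  by_contra hne
  exact (hP.dotProduct_mulVec_pos hne).ne' hself

end Lyapunov

end Matrix

theorem isStable_of_lyapunov {n : ℕ} {A Q : Matrix (Fin n) (Fin n) ℝ} (hQ : Q.PosDef)
    (hL : (-(Aᵀ * Q + Q * A)).PosSemidef) : IsStable A := by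
  have hLC : (-((toC A)ᴴ * toC Q + toC Q * toC A)).PosSemidef := by
    have h : -((toC A)ᴴ * toC Q + toC Q * toC A) = (-(Aᵀ * Q + Q * A)).map (↑) := by
      ext i j
      simp [toC, Matrix.mul_apply]
    rw [h]
    exact hL.map_ofReal
  rintro μ ⟨x, hx0, hx⟩
  refine ⟨re_nonpos_of_lyapunov hQ.map_ofReal hLC hx0 hx, fun hμ y => ?_⟩
  have hn : n ≠ 0 := by
    rintro rfl
    exact hx0 (Subsingleton.elim _ _)
  exact pow_mulVec_eq_zero_iff
    (fun _ => sub_smul_one_mulVec_eq_zero_of_sq hQ.map_ofReal hLC hμ) hn y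

theorem DH_is_stable {n : ℕ} (J R Q : Matrix (Fin n) (Fin n) ℝ)
    (hJ : Jᵀ = -J) (hR : R.PosSemidef) (hQ : Q.PosDef) :
    IsStable ((J - R) * Q) :=
  isStable_of_lyapunov hQ (posSemidef_neg_lyapunov_sub_mul hJ hR hQ.isHermitian)
end

section
/- Let J, R, Q be real n×n matrices with Jᵀ = −J, R positive semidefinite, and Q positive semidefinite. Then every eigenvalue λ ∈ ℂ of the matrix (J − R)Q (viewed as a complex matrix) satisfies Re(λ) ≤ 0. -/
/-!
If `(J - R) Q x = μ x` with `x ≠ 0`, put `y = Q x`. Since `Q` is Hermitian,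
`y* (J - R) y = x* Q (J - R) Q x = μ · x* Q x`, where `x* Q x ≥ 0`. On the left, `y* J y` is purely
imaginary because `J` is skew-Hermitian and `y* R y ≥ 0`, so `Re μ · x* Q x ≤ 0`. If `x* Q x = 0`
then `Q x = 0`, hence `μ x = 0` and `μ = 0`.
-/

open Matrix

open scoped ComplexOrder

namespace Matrix

variable {𝕜 n : Type*} [RCLike 𝕜] [Fintype n]

lemma re_star_dotProduct_mulVec_eq_zero_of_conjTranspose_eq_neg {J : Matrix n n 𝕜}
    (hJ : Jᴴ = -J) (y : n → 𝕜) : RCLike.re (star y ⬝ᵥ J *ᵥ y) = 0 := by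
  have hstar : star (star y ⬝ᵥ J *ᵥ y) = -(star y ⬝ᵥ J *ᵥ y) := by
    rw [← star_dotProduct, star_mulVec, ← dotProduct_mulVec, hJ, neg_mulVec, dotProduct_neg]
  have hre := congrArg RCLike.re hstar
  rw [RCLike.star_def, RCLike.conj_re, map_neg] at hre
  linarith

lemma PosSemidef.re_dotProduct_mulVec_nonneg {R : Matrix n n 𝕜} (hR : R.PosSemidef)
    (y : n → 𝕜) : 0 ≤ RCLike.re (star y ⬝ᵥ R *ᵥ y) :=
  (RCLike.nonneg_iff.mp (hR.dotProduct_mulVec_nonneg y)).1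

theorem re_le_zero_of_mulVec_eq_smul_of_conjTranspose_eq_neg {J R Q : Matrix n n 𝕜}
    (hJ : Jᴴ = -J) (hR : R.PosSemidef) (hQ : Q.PosSemidef) {μ : 𝕜} {x : n → 𝕜} (hx : x ≠ 0)
    (heig : ((J - R) * Q) *ᵥ x = μ • x) : RCLike.re μ ≤ 0 := by
  set y := Q *ᵥ x
  set s := star x ⬝ᵥ Q *ᵥ x
  have hy : (J - R) *ᵥ y = μ • x := by rw [mulVec_mulVec, heig]
  have hquad : star y ⬝ᵥ (J - R) *ᵥ y = μ * s := by
    rw [hy, dotProduct_smul, smul_eq_mul, star_mulVec, hQ.isHermitian.eq, ← dotProduct_mulVec]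
  obtain ⟨hs_re, hs_im⟩ : 0 ≤ RCLike.re s ∧ RCLike.im s = 0 :=
    RCLike.nonneg_iff.mp (hQ.dotProduct_mulVec_nonneg x)
  have hprod : RCLike.re μ * RCLike.re s ≤ 0 :=
    calc RCLike.re μ * RCLike.re s = RCLike.re (μ * s) := by simp [RCLike.mul_re, hs_im]
      _ = RCLike.re (star y ⬝ᵥ J *ᵥ y) - RCLike.re (star y ⬝ᵥ R *ᵥ y) := by
        rw [← hquad, sub_mulVec, dotProduct_sub, map_sub]
      _ ≤ 0 := by
        rw [re_star_dotProduct_mulVec_eq_zero_of_conjTranspose_eq_neg hJ]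
        linarith [hR.re_dotProduct_mulVec_nonneg y]
  rcases hs_re.lt_or_eq with hs_pos | hs_zero
  · exact nonpos_of_mul_nonpos_left hprod hs_pos
  · have hs : s = 0 := RCLike.ext (by rw [map_zero, hs_zero]) (by rw [map_zero, hs_im])
    have hQx : y = 0 := (hQ.dotProduct_mulVec_zero_iff x).mp hs
    have hμ : μ • x = 0 := by rw [← hy, hQx, mulVec_zero]
    simp [(smul_eq_zero.mp hμ).resolve_right hx]

end Matrix

lemma toC_mul {n : ℕ} (A B : Matrix (Fin n) (Fin n) ℝ) : toC (A * B) = toC A * toC B :=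
  Matrix.map_mul (f := Complex.ofRealHom)

lemma toC_sub {n : ℕ} (A B : Matrix (Fin n) (Fin n) ℝ) : toC (A - B) = toC A - toC B :=
  Matrix.map_sub _ (map_sub Complex.ofRealHom) A B

lemma toC_neg {n : ℕ} (A : Matrix (Fin n) (Fin n) ℝ) : toC (-A) = -toC A :=
  Matrix.map_neg _ (map_neg Complex.ofRealHom) A

lemma conjTranspose_toC {n : ℕ} (A : Matrix (Fin n) (Fin n) ℝ) : (toC A)ᴴ = toC Aᵀ := by
  rw [toC, ← conjTranspose_map _ (fun a => (Complex.conj_ofReal a).symm),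
    conjTranspose_eq_transpose_of_trivial]
  rfl

lemma Matrix.PosSemidef.toC {n : ℕ} {A : Matrix (Fin n) (Fin n) ℝ} (hA : A.PosSemidef) :
    (toC A).PosSemidef := by
  open scoped MatrixOrder in
  obtain ⟨B, rfl⟩ := CStarAlgebra.nonneg_iff_eq_star_mul_self.mp hA.nonneg
  rw [star_eq_conjTranspose, toC_mul, conjTranspose_eq_transpose_of_trivial, ← conjTranspose_toC]
  exact posSemidef_conjTranspose_mul_self (_root_.toC B)

theorem eigenvalues_DH_psd_nonpos_re {n : ℕ} (J R Q : Matrix (Fin n) (Fin n) ℝ)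
    (hJ : Jᵀ = -J) (hR : R.PosSemidef) (hQ : Q.PosSemidef)
    (μ : ℂ) (x : Fin n → ℂ) (hx : x ≠ 0) (heig : toC ((J - R) * Q) *ᵥ x = μ • x) :
    μ.re ≤ 0 := by
  have hJc : (toC J)ᴴ = -toC J := by rw [conjTranspose_toC, hJ, toC_neg]
  rw [toC_mul, toC_sub] at heig
  simpa using re_le_zero_of_mulVec_eq_smul_of_conjTranspose_eq_neg hJc hR.toC hQ.toC hx heig
end

section
/- For any real n×n matrix A, the infimum of ‖A − (J − R)Q‖_F² over all real n×n matrices J, R, Q with Jᵀ = −J, R positive semidefinite, and Q positive definite equals the infimum of the same quantity taken over all such J, R with Q only required to be positive semidefinite. -/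
open Matrix

/-- The squared Frobenius norm of a real matrix. -/
def frobSq {n : ℕ} (A : Matrix (Fin n) (Fin n) ℝ) : ℝ := ∑ i, ∑ j, (A i j) ^ 2

lemma frobSq_nonneg {n : ℕ} (A : Matrix (Fin n) (Fin n) ℝ) : 0 ≤ frobSq A := by
  unfold frobSq; positivity

theorem inf_posdef_eq_inf_psd {n : ℕ} (A : Matrix (Fin n) (Fin n) ℝ) :
    sInf {v : ℝ | ∃ J R Q : Matrix (Fin n) (Fin n) ℝ,
        Jᵀ = -J ∧ R.PosSemidef ∧ Q.PosDef ∧ v = frobSq (A - (J - R) * Q)} =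
      sInf {v : ℝ | ∃ J R Q : Matrix (Fin n) (Fin n) ℝ,
        Jᵀ = -J ∧ R.PosSemidef ∧ Q.PosSemidef ∧ v = frobSq (A - (J - R) * Q)} := by
  set S₁ := {v : ℝ | ∃ J R Q : Matrix (Fin n) (Fin n) ℝ,
        Jᵀ = -J ∧ R.PosSemidef ∧ Q.PosDef ∧ v = frobSq (A - (J - R) * Q)} with hS₁
  set S₂ := {v : ℝ | ∃ J R Q : Matrix (Fin n) (Fin n) ℝ,
        Jᵀ = -J ∧ R.PosSemidef ∧ Q.PosSemidef ∧ v = frobSq (A - (J - R) * Q)} with hS₂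
  have hsub : S₁ ⊆ S₂ := by
    rintro v ⟨J, R, Q, hJ, hR, hQ, hv⟩
    exact ⟨J, R, Q, hJ, hR, hQ.posSemidef, hv⟩
  have hne₁ : S₁.Nonempty :=
    ⟨frobSq (A - ((0 : Matrix (Fin n) (Fin n) ℝ) - 0) * 1), 0, 0, 1, by simp,
      Matrix.PosSemidef.zero, Matrix.PosDef.one, rfl⟩
  have hbdd₂ : BddBelow S₂ := by
    refine ⟨0, ?_⟩
    rintro v ⟨J, R, Q, _, _, _, rfl⟩
    exact frobSq_nonneg _
  have hbdd₁ : BddBelow S₁ := hbdd₂.mono hsub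
  refine le_antisymm ?_ (csInf_le_csInf hbdd₂ hne₁ hsub)
  refine le_csInf (hne₁.mono hsub) ?_
  rintro v ⟨J, R, Q, hJ, hR, hQ, rfl⟩
  set B := A - (J - R) * Q with hB
  set C := J - R with hC
  have key : ∀ t ∈ Set.Ioi (0 : ℝ), sInf S₁ ≤ frobSq (B - t • C) := by
    intro t ht
    have hQt : (Q + t • (1 : Matrix (Fin n) (Fin n) ℝ)).PosDef := by
      refine Matrix.PosDef.posSemidef_add hQ ?_
      rw [smul_one_eq_diagonal]
      exact Matrix.PosDef.diagonal fun _ => ht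
    have heq : A - (J - R) * (Q + t • (1 : Matrix (Fin n) (Fin n) ℝ)) = B - t • C := by
      rw [mul_add, Matrix.mul_smul, mul_one, sub_add_eq_sub_sub, hB, hC]
    exact csInf_le hbdd₁ ⟨J, R, Q + t • 1, hJ, hR, hQt, by rw [heq]⟩
  have hcont : Continuous fun t : ℝ => frobSq (B - t • C) := by
    unfold frobSq
    refine continuous_finset_sum _ fun i _ => continuous_finset_sum _ fun j _ => ?_
    simp only [Matrix.sub_apply, Matrix.smul_apply, smul_eq_mul]
    fun_prop
  have htend : Filter.Tendsto (fun t : ℝ => frobSq (B - t • C)) (nhdsWithin 0 (Set.Ioi 0))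
      (nhds (frobSq B)) := by
    have := (hcont.tendsto 0).mono_left (nhdsWithin_le_nhds (s := Set.Ioi 0))
    simpa using this
  exact ge_of_tendsto htend (Filter.eventually_of_mem self_mem_nhdsWithin key)
end

section
/- Let Z be a real n×n matrix and let S := (Z + Zᵀ)/2 with spectral decomposition S = UΓUᵀ, where U is orthogonal and Γ is diagonal with real entries. Then the minimum of ‖Z − R‖_F² over all positive semidefinite real n×n matrices R is attained at R = U·max(Γ, 0)·Uᵀ (the entrywise positive part of Γ), and this minimum equals ‖(Z − Zᵀ)/2‖_F² + Σ_{λ eigenvalue of S, λ < 0} λ² (counted with multiplicity). -/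
open Matrix

/-!
Write `Z = S + A` with `S` the symmetric and `A` the skew-symmetric part. Symmetric and
skew-symmetric matrices are Frobenius-orthogonal, so for symmetric `R` we get
`‖Z - R‖² = ‖A‖² + ‖S - R‖²`, and conjugating by the orthogonal `U` gives
`‖S - R‖² = ‖Γ - M‖²` with `M = UᵀRU`, again positive semidefinite. Keeping only the diagonal,
`‖Γ - M‖² ≥ ∑ (γᵢ - mᵢᵢ)² ≥ ∑_{γᵢ < 0} γᵢ²` because `mᵢᵢ ≥ 0`, and `M = max(Γ, 0)` attains this.
-/

section

variable {n : ℕ}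

lemma frobSq_eq_trace (A : Matrix (Fin n) (Fin n) ℝ) : frobSq A = (Aᵀ * A).trace := by
  simp only [frobSq, trace, diag, mul_apply, transpose_apply, sq]
  exact Finset.sum_comm

lemma frobSq_add_of_transpose_eq_neg_of_isSymm {A B : Matrix (Fin n) (Fin n) ℝ}
    (hA : Aᵀ = -A) (hB : B.IsSymm) : frobSq (A + B) = frobSq A + frobSq B := by
  have hcross : (Aᵀ * B).trace + (Bᵀ * A).trace = 0 := by
    rw [hA, hB.eq, neg_mul, trace_neg, trace_mul_comm B A, neg_add_cancel]
  rw [frobSq_eq_trace, frobSq_eq_trace, frobSq_eq_trace, transpose_add, add_mul, mul_add, mul_add,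
    trace_add, trace_add, trace_add]
  linarith

lemma frobSq_mul_mul_transpose {U : Matrix (Fin n) (Fin n) ℝ} (hU : Uᵀ * U = 1)
    (A : Matrix (Fin n) (Fin n) ℝ) : frobSq (U * A * Uᵀ) = frobSq A := by
  have hUAU : (U * A * Uᵀ)ᵀ * (U * A * Uᵀ) = U * (Aᵀ * A) * Uᵀ := by
    simp only [transpose_mul, transpose_transpose, Matrix.mul_assoc]
    rw [← Matrix.mul_assoc Uᵀ U, hU, Matrix.one_mul]
  rw [frobSq_eq_trace, frobSq_eq_trace, hUAU, trace_mul_cycle, hU, Matrix.one_mul]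

lemma frobSq_mul_mul_transpose_sub {U : Matrix (Fin n) (Fin n) ℝ} (hU : Uᵀ * U = 1)
    (D R : Matrix (Fin n) (Fin n) ℝ) : frobSq (U * D * Uᵀ - R) = frobSq (D - Uᵀ * R * U) := by
  have hR : U * (Uᵀ * R * U) * Uᵀ = R := by
    simp only [← Matrix.mul_assoc, mul_eq_one_comm.mp hU, Matrix.one_mul]
    rw [Matrix.mul_assoc, mul_eq_one_comm.mp hU, Matrix.mul_one]
  rw [← frobSq_mul_mul_transpose hU (D - Uᵀ * R * U), Matrix.mul_sub, Matrix.sub_mul, hR]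

lemma frobSq_diagonal (f : Fin n → ℝ) : frobSq (diagonal f) = ∑ i, f i ^ 2 := by
  refine Finset.sum_congr rfl fun i _ => ?_
  rw [Finset.sum_eq_single i (fun j _ hji => by simp [diagonal_apply_ne' _ hji]) (by simp),
    diagonal_apply_eq]

lemma sum_sq_diag_le_frobSq (A : Matrix (Fin n) (Fin n) ℝ) : ∑ i, A i i ^ 2 ≤ frobSq A :=
  Finset.sum_le_sum fun i _ =>
    Finset.single_le_sum (f := fun j => A i j ^ 2) (fun _ _ => sq_nonneg _) (Finset.mem_univ i)

lemma frobSq_sub_eq_of_isSymm (Z : Matrix (Fin n) (Fin n) ℝ) {R : Matrix (Fin n) (Fin n) ℝ}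
    (hR : R.IsSymm) :
    frobSq (Z - R) = frobSq ((2 : ℝ)⁻¹ • (Z - Zᵀ)) + frobSq ((2 : ℝ)⁻¹ • (Z + Zᵀ) - R) := by
  have hS : ((2 : ℝ)⁻¹ • (Z + Zᵀ) - R).IsSymm :=
    ((isSymm_add_transpose_self Z).smul _).sub hR
  have hA : ((2 : ℝ)⁻¹ • (Z - Zᵀ))ᵀ = -((2 : ℝ)⁻¹ • (Z - Zᵀ)) := by
    rw [transpose_smul, transpose_sub, transpose_transpose, ← smul_neg, neg_sub]
  rw [← frobSq_add_of_transpose_eq_neg_of_isSymm hA hS]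
  congr 1
  module

end

lemma sq_sub_max_zero (x : ℝ) : (x - max x 0) ^ 2 = if x < 0 then x ^ 2 else 0 := by
  split_ifs with hx
  · rw [max_eq_right hx.le, sub_zero]
  · rw [max_eq_left (not_lt.mp hx), sub_self, sq, mul_zero]

lemma sq_ite_neg_le_sq_sub {x m : ℝ} (hm : 0 ≤ m) :
    (if x < 0 then x ^ 2 else 0) ≤ (x - m) ^ 2 := by
  split_ifs with hx
  · nlinarith
  · positivity

theorem psd_projection {n : ℕ} (Z U : Matrix (Fin n) (Fin n) ℝ) (d : Fin n → ℝ)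
    (hU : Uᵀ * U = 1)
    (hS : (2 : ℝ)⁻¹ • (Z + Zᵀ) = U * Matrix.diagonal d * Uᵀ) :
    (U * Matrix.diagonal (fun i => max (d i) 0) * Uᵀ).PosSemidef ∧
    (∀ R : Matrix (Fin n) (Fin n) ℝ, R.PosSemidef →
      frobSq (Z - U * Matrix.diagonal (fun i => max (d i) 0) * Uᵀ) ≤ frobSq (Z - R)) ∧
    frobSq (Z - U * Matrix.diagonal (fun i => max (d i) 0) * Uᵀ) =
      frobSq ((2 : ℝ)⁻¹ • (Z - Zᵀ)) + ∑ i, if d i < 0 then (d i) ^ 2 else 0 := by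
  have hdist : ∀ R : Matrix (Fin n) (Fin n) ℝ, R.PosSemidef →
      frobSq (Z - R) = frobSq ((2 : ℝ)⁻¹ • (Z - Zᵀ)) + frobSq (U * diagonal d * Uᵀ - R) :=
    fun R hR => by
      rw [frobSq_sub_eq_of_isSymm Z (isHermitian_iff_isSymm.mp hR.isHermitian), hS]
  have hpsd : (U * diagonal (fun i => max (d i) 0) * Uᵀ).PosSemidef := by
    simpa using
      (posSemidef_diagonal_iff.mpr fun i => le_max_right (d i) 0).mul_mul_conjTranspose_same U
  have hval : frobSq (Z - U * diagonal (fun i => max (d i) 0) * Uᵀ) =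
      frobSq ((2 : ℝ)⁻¹ • (Z - Zᵀ)) + ∑ i, if d i < 0 then (d i) ^ 2 else 0 := by
    rw [hdist _ hpsd, ← Matrix.sub_mul, ← Matrix.mul_sub, frobSq_mul_mul_transpose hU,
      diagonal_sub, frobSq_diagonal]
    simp only [sq_sub_max_zero]
  refine ⟨hpsd, fun R hR => ?_, hval⟩
  rw [hval, hdist R hR, frobSq_mul_mul_transpose_sub hU, add_le_add_iff_left]
  refine le_trans (Finset.sum_le_sum fun i _ => ?_) (sum_sq_diag_le_frobSq _)
  simpa using sq_ite_neg_le_sq_sub (x := d i) (hR.conjTranspose_mul_mul_same U).diag_nonneg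
end
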